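/- arXiv:2409.18632 — 3 statements merged into one kernel-verified Lean document; each statement's English description precedes it below -/
import Mathlib

section
/- Let (D_k) be a nonnegative real sequence satisfying D_{k+1} ≤ (1 − φ)D_k + ϑ θ²/(k + k₀)² for all k ≥ 0, where φ ∈ (0,1), ϑ, θ ≥ 0, and k₀ > 2/φ. Then there is a constant ι ≥ (1 + 1/k₀)² such that for all k ≥ 0, D_k ≤ (1 − φ)^k D_0 + (2ι ϑ θ²/φ) · 1/(k + k₀)². -/
/-!
With `ρ = (1 + 1/k₀)²` one has `(k + 1 + k₀)² ≤ ρ (k + k₀)²`, so `C / (k + k₀)²` is a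
supersolution of the recursion as soon as `ρ ((1 - φ) C + ϑ θ²) ≤ C`, and comparison with it
gives the bound. Such a `C` exists because `k₀ > 2/φ` forces `ρ (1 - φ) < 1`; taking
`ι = ρ φ / (1 - ρ (1 - φ))` makes `C = 2 ι ϑ θ² / φ` twice the fixed point `ρ ϑ θ² / (1 - ρ (1 - φ))`.
-/

theorem le_pow_mul_add_of_le_supersolution {u v b : ℕ → ℝ} {q : ℝ} (hq : 0 ≤ q)
    (hu : ∀ k, u (k + 1) ≤ q * u k + b k) (hv : ∀ k, q * v k + b k ≤ v (k + 1))
    (hv₀ : 0 ≤ v 0) (k : ℕ) : u k ≤ q ^ k * u 0 + v k := by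
  induction k with
  | zero => simpa using hv₀
  | succ k ih =>
    calc u (k + 1) ≤ q * u k + b k := hu k
      _ ≤ q * (q ^ k * u 0 + v k) + b k := by gcongr
      _ = q ^ (k + 1) * u 0 + (q * v k + b k) := by ring
      _ ≤ q ^ (k + 1) * u 0 + v (k + 1) := by gcongr; exact hv k

theorem add_one_sq_le_one_add_inv_sq_mul_sq {k₀ x : ℝ} (hk₀ : 0 < k₀) (hx : k₀ ≤ x) :
    (x + 1) ^ 2 ≤ (1 + 1 / k₀) ^ 2 * x ^ 2 := by
  rw [← mul_pow]
  have : 1 ≤ x / k₀ := (one_le_div hk₀).2 hx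
  refine pow_le_pow_left₀ (by linarith) ?_ 2
  calc x + 1 ≤ x + x / k₀ := by gcongr
    _ = (1 + 1 / k₀) * x := by ring

theorem inv_sq_supersolution {k₀ x q a C : ℝ} (hk₀ : 0 < k₀) (hx : k₀ ≤ x) (hq : 0 ≤ q)
    (ha : 0 ≤ a) (hC₀ : 0 ≤ C) (hC : (1 + 1 / k₀) ^ 2 * (q * C + a) ≤ C) :
    q * (C * (1 / x ^ 2)) + a / x ^ 2 ≤ C * (1 / (x + 1) ^ 2) := by
  have hx₀ : 0 < x := hk₀.trans_le hx
  rw [mul_one_div, mul_one_div, ← mul_div_assoc, ← add_div,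
    div_le_div_iff₀ (by positivity) (by positivity)]
  calc (q * C + a) * (x + 1) ^ 2 ≤ (q * C + a) * ((1 + 1 / k₀) ^ 2 * x ^ 2) := by
        gcongr; exact add_one_sq_le_one_add_inv_sq_mul_sq hk₀ hx
    _ = (1 + 1 / k₀) ^ 2 * (q * C + a) * x ^ 2 := by ring
    _ ≤ C * x ^ 2 := by gcongr

theorem le_pow_mul_add_div_sq {u : ℕ → ℝ} {k₀ q a C : ℝ} (hk₀ : 0 < k₀) (hq : 0 ≤ q)
    (ha : 0 ≤ a) (hC₀ : 0 ≤ C) (hC : (1 + 1 / k₀) ^ 2 * (q * C + a) ≤ C)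
    (hu : ∀ k : ℕ, u (k + 1) ≤ q * u k + a / ((k : ℝ) + k₀) ^ 2) (k : ℕ) :
    u k ≤ q ^ k * u 0 + C * (1 / ((k : ℝ) + k₀) ^ 2) := by
  refine le_pow_mul_add_of_le_supersolution (v := fun k : ℕ ↦ C * (1 / ((k : ℝ) + k₀) ^ 2))
    hq hu (fun k ↦ ?_) (by positivity) k
  have hsucc : ((k + 1 : ℕ) : ℝ) + k₀ = (k + k₀) + 1 := by push_cast; ring
  simpa only [hsucc] using
    inv_sq_supersolution hk₀ (le_add_of_nonneg_left k.cast_nonneg) hq ha hC₀ hC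

theorem one_add_inv_sq_mul_one_sub_lt_one {φ k₀ : ℝ} (hφ₀ : 0 < φ) (hφ₁ : φ < 1)
    (hk₀ : 2 / φ < k₀) : (1 + 1 / k₀) ^ 2 * (1 - φ) < 1 := by
  have hk₀pos : 0 < k₀ := (div_pos two_pos hφ₀).trans hk₀
  have hinv : 1 / k₀ < φ / 2 := by
    rw [div_lt_div_iff₀ hk₀pos two_pos]
    linarith [(div_lt_iff₀ hφ₀).1 hk₀]
  calc (1 + 1 / k₀) ^ 2 * (1 - φ) < (1 + φ / 2) ^ 2 * (1 - φ) := by gcongr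
    _ = 1 - φ ^ 2 * (3 + φ) / 4 := by ring
    _ < 1 := by have := pow_pos hφ₀ 2; nlinarith

theorem stmt5_general (D : ℕ → ℝ) (φ ϑ θ k₀ : ℝ)
    (hφ : φ ∈ Set.Ioo (0:ℝ) 1) (hϑ : 0 ≤ ϑ)
    (hk₀ : k₀ > 2 / φ)
    (hrec : ∀ k : ℕ, D (k + 1) ≤ (1 - φ) * D k + ϑ * θ ^ 2 / ((k : ℝ) + k₀) ^ 2) :
    ∃ ι : ℝ, ι ≥ (1 + 1 / k₀) ^ 2 ∧
      ∀ k : ℕ, D k ≤ (1 - φ) ^ k * D 0 + (2 * ι * ϑ * θ ^ 2 / φ) * (1 / ((k : ℝ) + k₀) ^ 2) := by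
  obtain ⟨hφ₀, hφ₁⟩ := hφ
  have hk₀pos : 0 < k₀ := (div_pos two_pos hφ₀).trans hk₀
  set ρ := (1 + 1 / k₀) ^ 2
  have hρ : 1 ≤ ρ := one_le_pow₀ (le_add_of_nonneg_right (by positivity))
  have hδ : 0 < 1 - ρ * (1 - φ) := sub_pos.2 (one_add_inv_sq_mul_one_sub_lt_one hφ₀ hφ₁ hk₀)
  refine ⟨ρ * φ / (1 - ρ * (1 - φ)), ?_, fun k ↦ ?_⟩
  · have hδφ : 1 - ρ * (1 - φ) ≤ φ := by nlinarith
    rw [ge_iff_le, le_div_iff₀ hδ]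
    gcongr
  · have hC : 2 * (ρ * φ / (1 - ρ * (1 - φ))) * ϑ * θ ^ 2 / φ
        = 2 * ρ * (ϑ * θ ^ 2) / (1 - ρ * (1 - φ)) := by
      field_simp
    rw [hC]
    refine le_pow_mul_add_div_sq hk₀pos (by linarith) (by positivity) (by positivity) ?_ hrec k
    calc ρ * ((1 - φ) * (2 * ρ * (ϑ * θ ^ 2) / (1 - ρ * (1 - φ))) + ϑ * θ ^ 2)
        = ρ * (ϑ * θ ^ 2) * (1 + ρ * (1 - φ)) / (1 - ρ * (1 - φ)) := by
          field_simp; ring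
      _ ≤ ρ * (ϑ * θ ^ 2) * 2 / (1 - ρ * (1 - φ)) := by gcongr; linarith
      _ = 2 * ρ * (ϑ * θ ^ 2) / (1 - ρ * (1 - φ)) := by ring

theorem stmt5 (D : ℕ → ℝ) (φ ϑ θ k₀ : ℝ)
    (hD : ∀ k, 0 ≤ D k) (hφ : φ ∈ Set.Ioo (0:ℝ) 1) (hϑ : 0 ≤ ϑ) (hθ : 0 ≤ θ)
    (hk₀ : k₀ > 2 / φ)
    (hrec : ∀ k : ℕ, D (k + 1) ≤ (1 - φ) * D k + ϑ * θ ^ 2 / ((k : ℝ) + k₀) ^ 2) :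
    ∃ ι : ℝ, ι ≥ (1 + 1 / k₀) ^ 2 ∧
      ∀ k : ℕ, D k ≤ (1 - φ) ^ k * D 0 + (2 * ι * ϑ * θ ^ 2 / φ) * (1 / ((k : ℝ) + k₀) ^ 2) :=
  stmt5_general D φ ϑ θ k₀ hφ hϑ hk₀ hrec
end

section
/- Suppose the clipping parameter is chosen as τᵢ = sqrt( (∑_{j∈Rᵢ} w_{ij}‖x̃ᵢ − x̃ⱼ‖₂²) / (∑_{j∈Bᵢ} w_{ij}) ) with ∑_{j∈Bᵢ} w_{ij} > 0. Then, writing z̃ⱼ = x̃ᵢ + Clip(x̃ⱼ − x̃ᵢ, τᵢ), the combined error satisfies 2‖∑_{j∈Rᵢ} w_{ij}(z̃ⱼ − x̃ⱼ)‖₂² + 2‖∑_{j∈Bᵢ} w_{ij}(z̃ⱼ − x̃ᵢ)‖₂² ≤ 4 (∑_{b∈Bᵢ} w_{ib}) (∑_{r∈Rᵢ} w_{ir}‖x̃ᵢ − x̃ᵣ‖₂²). -/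
noncomputable def Clip {n : ℕ} (v : EuclideanSpace ℝ (Fin n)) (τ : ℝ) :
    EuclideanSpace ℝ (Fin n) :=
  (min 1 (τ / ‖v‖)) • v

/-!
Write `vⱼ = x̃ⱼ - x̃ᵢ`, `S = ∑_{Rᵢ} wⱼ ‖vⱼ‖²` and `W = ∑_{Bᵢ} wⱼ`, so that `τ² = S / W`.
Clipping moves a vector by at most `‖v‖² / τ` and leaves it of length at most `τ`. Hence the
reliable error has norm at most `S / τ` and the Byzantine error at most `W τ`, and both squares
equal `W S`.
-/

section

open Finset

variable {n : ℕ} {ι : Type*}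

lemma Clip_zero (τ : ℝ) : Clip (0 : EuclideanSpace ℝ (Fin n)) τ = 0 := by
  simp [Clip]

lemma norm_Clip_le (v : EuclideanSpace ℝ (Fin n)) {τ : ℝ} (hτ : 0 ≤ τ) : ‖Clip v τ‖ ≤ τ := by
  rcases eq_or_ne v 0 with rfl | hv
  · simpa [Clip_zero] using hτ
  have hv : 0 < ‖v‖ := norm_pos_iff.mpr hv
  rw [Clip, norm_smul, Real.norm_of_nonneg (le_min zero_le_one (by positivity))]
  calc min 1 (τ / ‖v‖) * ‖v‖ ≤ τ / ‖v‖ * ‖v‖ := by gcongr; exact min_le_right _ _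
    _ = τ := div_mul_cancel₀ _ hv.ne'

lemma norm_Clip_sub_self_mul_le (v : EuclideanSpace ℝ (Fin n)) (τ : ℝ) :
    ‖Clip v τ - v‖ * τ ≤ ‖v‖ ^ 2 := by
  rcases eq_or_ne v 0 with rfl | hv
  · simp [Clip_zero]
  have hv : 0 < ‖v‖ := norm_pos_iff.mpr hv
  set m := min 1 (τ / ‖v‖)
  have hm : Clip v τ - v = (m - 1) • v := by rw [Clip, sub_smul, one_smul]
  rw [hm, norm_smul, Real.norm_of_nonpos (by linarith [min_le_left 1 (τ / ‖v‖)])]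
  rcases le_total 1 (τ / ‖v‖) with hle | hle
  · simp [m, min_eq_left hle]
  · rw [show m = τ / ‖v‖ from min_eq_right hle, neg_sub, sub_mul, one_mul,
      div_mul_cancel₀ _ hv.ne']
    nlinarith [sq_nonneg (‖v‖ - 2 * τ)]

lemma norm_sum_smul_le_sum_mul {E : Type*} [SeminormedAddCommGroup E] [NormedSpace ℝ E]
    (s : Finset ι) {w : ι → ℝ} (hw : ∀ j, 0 ≤ w j) (u : ι → E) :
    ‖∑ j ∈ s, w j • u j‖ ≤ ∑ j ∈ s, w j * ‖u j‖ :=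
  (norm_sum_le _ _).trans_eq <| sum_congr rfl fun j _ => by
    rw [norm_smul, Real.norm_of_nonneg (hw j)]

section WeightedClipping

variable (s : Finset ι) {w : ι → ℝ} (hw : ∀ j, 0 ≤ w j) (v : ι → EuclideanSpace ℝ (Fin n))
include hw

lemma norm_sum_smul_Clip_le {τ : ℝ} (hτ : 0 ≤ τ) :
    ‖∑ j ∈ s, w j • Clip (v j) τ‖ ≤ (∑ j ∈ s, w j) * τ :=
  calc ‖∑ j ∈ s, w j • Clip (v j) τ‖ ≤ ∑ j ∈ s, w j * ‖Clip (v j) τ‖ :=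
        norm_sum_smul_le_sum_mul s hw _
    _ ≤ ∑ j ∈ s, w j * τ := by gcongr with j; exacts [hw j, norm_Clip_le _ hτ]
    _ = (∑ j ∈ s, w j) * τ := (sum_mul ..).symm

lemma norm_sum_smul_Clip_sub_mul_le {τ : ℝ} (hτ : 0 ≤ τ) :
    ‖∑ j ∈ s, w j • (Clip (v j) τ - v j)‖ * τ ≤ ∑ j ∈ s, w j * ‖v j‖ ^ 2 :=
  calc ‖∑ j ∈ s, w j • (Clip (v j) τ - v j)‖ * τ
        ≤ (∑ j ∈ s, w j * ‖Clip (v j) τ - v j‖) * τ := by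
          gcongr; exact norm_sum_smul_le_sum_mul s hw _
    _ = ∑ j ∈ s, w j * (‖Clip (v j) τ - v j‖ * τ) := by rw [sum_mul]; simp only [mul_assoc]
    _ ≤ ∑ j ∈ s, w j * ‖v j‖ ^ 2 := by
          gcongr with j; exacts [hw j, norm_Clip_sub_self_mul_le _ τ]

lemma sum_smul_Clip_sub_eq_zero (h : ∑ j ∈ s, w j * ‖v j‖ ^ 2 = 0) (τ : ℝ) :
    ∑ j ∈ s, w j • (Clip (v j) τ - v j) = 0 := by
  refine sum_eq_zero fun j hj => ?_
  have hj := (sum_eq_zero_iff_of_nonneg fun j _ => mul_nonneg (hw j) (sq_nonneg _)).mp h j hj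
  rcases mul_eq_zero.mp hj with hwj | hvj
  · rw [hwj, zero_smul]
  · rw [norm_eq_zero.mp (pow_eq_zero_iff two_ne_zero |>.mp hvj), Clip_zero, sub_zero, smul_zero]

lemma sq_norm_sum_smul_Clip_sub_le {W : ℝ} (hW : 0 < W) :
    ‖∑ j ∈ s, w j • (Clip (v j) √((∑ j ∈ s, w j * ‖v j‖ ^ 2) / W) - v j)‖ ^ 2 ≤
      W * ∑ j ∈ s, w j * ‖v j‖ ^ 2 := by
  set S := ∑ j ∈ s, w j * ‖v j‖ ^ 2
  rcases (sum_nonneg fun j _ => mul_nonneg (hw j) (sq_nonneg _) : 0 ≤ S).eq_or_lt with hS | hS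
  · rw [sum_smul_Clip_sub_eq_zero s hw v hS.symm]; simp [S, ← hS]
  set A := ‖∑ j ∈ s, w j • (Clip (v j) √(S / W) - v j)‖
  have hτ : 0 < √(S / W) := Real.sqrt_pos.mpr (div_pos hS hW)
  have hAτ : A * √(S / W) ≤ S := norm_sum_smul_Clip_sub_mul_le s hw v hτ.le
  have hsq : (A * √(S / W)) ^ 2 ≤ S ^ 2 := pow_le_pow_left₀ (by positivity) hAτ 2
  rw [mul_pow, Real.sq_sqrt (div_pos hS hW).le] at hsq
  have : A ^ 2 * S ≤ W * S * S := by
    calc A ^ 2 * S = A ^ 2 * (S / W) * W := by field_simp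
      _ ≤ S ^ 2 * W := by gcongr
      _ = W * S * S := by ring
  exact le_of_mul_le_mul_right this hS

lemma sq_norm_sum_smul_Clip_le {S : ℝ} (hS : 0 ≤ S) (hW : 0 < ∑ j ∈ s, w j) :
    ‖∑ j ∈ s, w j • Clip (v j) √(S / ∑ j ∈ s, w j)‖ ^ 2 ≤ (∑ j ∈ s, w j) * S :=
  calc ‖∑ j ∈ s, w j • Clip (v j) √(S / ∑ j ∈ s, w j)‖ ^ 2
        ≤ ((∑ j ∈ s, w j) * √(S / ∑ j ∈ s, w j)) ^ 2 := by
          gcongr; exact norm_sum_smul_Clip_le s hw v (Real.sqrt_nonneg _)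
    _ = (∑ j ∈ s, w j) * S := by rw [mul_pow, Real.sq_sqrt (by positivity)]; field_simp

end WeightedClipping

end

theorem stmt11_general {n : ℕ} {ι : Type*} (Ri Bi : Finset ι)
    (w : ι → ℝ) (hw : ∀ j, 0 ≤ w j)
    (xti : EuclideanSpace ℝ (Fin n)) (xt : ι → EuclideanSpace ℝ (Fin n))
    (hB : 0 < ∑ j ∈ Bi, w j)
    (τ : ℝ)
    (hτ : τ = Real.sqrt ((∑ j ∈ Ri, w j * ‖xti - xt j‖ ^ 2) / (∑ j ∈ Bi, w j)))
    (zt : ι → EuclideanSpace ℝ (Fin n))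
    (hz : ∀ j, zt j = xti + Clip (xt j - xti) τ) :
    2 * ‖∑ j ∈ Ri, w j • (zt j - xt j)‖ ^ 2 +
      2 * ‖∑ j ∈ Bi, w j • (zt j - xti)‖ ^ 2 ≤
    4 * (∑ b ∈ Bi, w b) * (∑ r ∈ Ri, w r * ‖xti - xt r‖ ^ 2) := by
  have hreliable : ∀ j, zt j - xt j = Clip (xt j - xti) τ - (xt j - xti) := fun j => by
    rw [hz j]; abel
  have hbyzantine : ∀ j, zt j - xti = Clip (xt j - xti) τ := fun j => by
    rw [hz j, add_sub_cancel_left]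
  simp only [hreliable, hbyzantine, norm_sub_rev xti] at hτ ⊢
  subst hτ
  have hS : 0 ≤ ∑ j ∈ Ri, w j * ‖xt j - xti‖ ^ 2 :=
    Finset.sum_nonneg fun j _ => mul_nonneg (hw j) (sq_nonneg _)
  have hR := sq_norm_sum_smul_Clip_sub_le Ri hw (fun j => xt j - xti) hB
  have hByz := sq_norm_sum_smul_Clip_le Bi hw (fun j => xt j - xti) hS hB
  linarith

theorem stmt11 {n : ℕ} {ι : Type*} (Ri Bi : Finset ι) (hdisj : Disjoint Ri Bi)
    (w : ι → ℝ) (hw : ∀ j, 0 ≤ w j)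
    (xti : EuclideanSpace ℝ (Fin n)) (xt : ι → EuclideanSpace ℝ (Fin n))
    (hB : 0 < ∑ j ∈ Bi, w j)
    (τ : ℝ)
    (hτ : τ = Real.sqrt ((∑ j ∈ Ri, w j * ‖xti - xt j‖ ^ 2) / (∑ j ∈ Bi, w j)))
    (zt : ι → EuclideanSpace ℝ (Fin n))
    (hz : ∀ j, zt j = xti + Clip (xt j - xti) τ) :
    2 * ‖∑ j ∈ Ri, w j • (zt j - xt j)‖ ^ 2 +
      2 * ‖∑ j ∈ Bi, w j • (zt j - xti)‖ ^ 2 ≤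
    4 * (∑ b ∈ Bi, w b) * (∑ r ∈ Ri, w r * ‖xti - xt r‖ ^ 2) :=
  stmt11_general Ri Bi w hw xti xt hB τ hτ zt hz
end

section
/- Consider the noisy gradient step x̃ᵢ = xᵢ − α(gᵢ + nᵢ) for each i in a finite index set R, where nᵢ are independent mean-zero random vectors in R^n with E‖nᵢ‖₂² ≤ nϖ². Let x̄ = (1/|R|)∑ᵢ xᵢ and x̂ = (1/|R|)∑ᵢ x̃ᵢ. Then for any η ∈ (0,1), ∑_{i∈R} E‖x̃ᵢ − x̂‖₂² ≤ (1/(1−η)) ∑_{i∈R} E‖xᵢ − x̄‖₂² + (2α²/η) ∑_{i∈R} E‖gᵢ − (1/|R|)∑_{j∈R} gⱼ‖₂² + (2 n |R| ϖ² α²/η). -/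
/-!
With bars denoting averages over the agents, `x̃ᵢ - x̂ = (xᵢ - x̄) - α((gᵢ - ḡ) + (nᵢ - n̄))`.
The weighted Young inequality `‖a + b‖² ≤ ‖a‖²/(1-η) + ‖b‖²/η` splits off the consensus
error, `‖a + b‖² ≤ 2(‖a‖² + ‖b‖²)` separates the gradient and noise deviations, and
`∑ᵢ ‖nᵢ - n̄‖² ≤ ∑ᵢ ‖nᵢ‖²` since the average minimises the sum of squared distances. The
resulting bound holds for every sample `ω`; integrating it gives the claim.
-/

open MeasureTheory

lemma add_sq_le_sq_div_add_sq_div (a b : ℝ) {η : ℝ} (h0 : 0 < η) (h1 : η < 1) :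
    (a + b) ^ 2 ≤ a ^ 2 / (1 - η) + b ^ 2 / η := by
  have h1' : 0 < 1 - η := by linarith
  rw [div_add_div _ _ h1'.ne' h0.ne', le_div_iff₀ (by positivity)]
  nlinarith [sq_nonneg (η * a - (1 - η) * b)]

lemma norm_add_sq_le_sq_div_add_sq_div {E : Type*} [SeminormedAddGroup E] (a b : E) {η : ℝ}
    (h0 : 0 < η) (h1 : η < 1) : ‖a + b‖ ^ 2 ≤ ‖a‖ ^ 2 / (1 - η) + ‖b‖ ^ 2 / η :=
  (pow_le_pow_left₀ (norm_nonneg _) (norm_add_le a b) 2).trans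
    (add_sq_le_sq_div_add_sq_div _ _ h0 h1)

section Average

variable {ι E : Type*} [Fintype ι] [NormedAddCommGroup E] [InnerProductSpace ℝ E]

lemma sum_norm_sub_average_sq (v : ι → E) :
    ∑ i, ‖v i - (Fintype.card ι : ℝ)⁻¹ • ∑ j, v j‖ ^ 2 =
      ∑ i, ‖v i‖ ^ 2 - Fintype.card ι * ‖(Fintype.card ι : ℝ)⁻¹ • ∑ j, v j‖ ^ 2 := by
  set c := (Fintype.card ι : ℝ)⁻¹ • ∑ j, v j
  have hsum_inner : ∑ i, inner ℝ (v i) c = Fintype.card ι * ‖c‖ ^ 2 := by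
    rcases isEmpty_or_nonempty ι with hι | hι
    · simp
    have hcard : (Fintype.card ι : ℝ) ≠ 0 := Nat.cast_ne_zero.mpr Fintype.card_ne_zero
    rw [← sum_inner, ← smul_inv_smul₀ hcard (∑ j, v j), real_inner_smul_left,
      real_inner_self_eq_norm_sq]
  simp only [norm_sub_sq_real, Finset.sum_add_distrib, Finset.sum_sub_distrib, ← Finset.mul_sum,
    hsum_inner, Finset.sum_const, Finset.card_univ, nsmul_eq_mul]
  ring

lemma sum_norm_sub_average_sq_le (v : ι → E) :
    ∑ i, ‖v i - (Fintype.card ι : ℝ)⁻¹ • ∑ j, v j‖ ^ 2 ≤ ∑ i, ‖v i‖ ^ 2 := by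
  rw [sum_norm_sub_average_sq]
  have : 0 ≤ (Fintype.card ι : ℝ) * ‖(Fintype.card ι : ℝ)⁻¹ • ∑ j, v j‖ ^ 2 := by positivity
  linarith

lemma sum_norm_step_sub_average_sq_le (x g ν : ι → E) (α : ℝ) {η : ℝ} (h0 : 0 < η) (h1 : η < 1) :
    ∑ i, ‖(x i - α • (g i + ν i)) -
        (Fintype.card ι : ℝ)⁻¹ • ∑ j, (x j - α • (g j + ν j))‖ ^ 2 ≤
      1 / (1 - η) * ∑ i, ‖x i - (Fintype.card ι : ℝ)⁻¹ • ∑ j, x j‖ ^ 2 +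
        2 * α ^ 2 / η * ∑ i, ‖g i - (Fintype.card ι : ℝ)⁻¹ • ∑ j, g j‖ ^ 2 +
        2 * α ^ 2 / η * ∑ i, ‖ν i‖ ^ 2 := by
  set N : ℝ := (Fintype.card ι : ℝ)⁻¹
  have split : ∀ i, (x i - α • (g i + ν i)) - N • ∑ j, (x j - α • (g j + ν j)) =
      (x i - N • ∑ j, x j) + (-α) • ((g i - N • ∑ j, g j) + (ν i - N • ∑ j, ν j)) := by
    intro i
    simp only [Finset.sum_sub_distrib, Finset.sum_add_distrib, ← Finset.smul_sum]
    module
  have pointwise : ∀ i, ‖(x i - α • (g i + ν i)) - N • ∑ j, (x j - α • (g j + ν j))‖ ^ 2 ≤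
      1 / (1 - η) * ‖x i - N • ∑ j, x j‖ ^ 2 + 2 * α ^ 2 / η * ‖g i - N • ∑ j, g j‖ ^ 2 +
        2 * α ^ 2 / η * ‖ν i - N • ∑ j, ν j‖ ^ 2 := by
    intro i
    set a := g i - N • ∑ j, g j
    set b := ν i - N • ∑ j, ν j
    have young := norm_add_sq_le_sq_div_add_sq_div (x i - N • ∑ j, x j) ((-α) • (a + b)) h0 h1
    have two_sq : ‖a + b‖ ^ 2 ≤ 2 * (‖a‖ ^ 2 + ‖b‖ ^ 2) :=
      (pow_le_pow_left₀ (norm_nonneg _) (norm_add_le a b) 2).trans add_sq_le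
    rw [norm_smul, mul_pow, Real.norm_eq_abs, sq_abs, neg_sq] at young
    rw [split]
    calc _ ≤ _ := young
      _ ≤ ‖x i - N • ∑ j, x j‖ ^ 2 / (1 - η) + α ^ 2 * (2 * (‖a‖ ^ 2 + ‖b‖ ^ 2)) / η := by
        gcongr
      _ = _ := by ring
  refine (Finset.sum_le_sum fun i _ => pointwise i).trans ?_
  simp only [Finset.sum_add_distrib, ← Finset.mul_sum]
  gcongr _ + _ * ?_
  exact sum_norm_sub_average_sq_le ν

end Average

lemma sum_integral_norm_step_sub_average_sq_le {ι E Ω : Type*} [Fintype ι] [NormedAddCommGroup E]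
    [InnerProductSpace ℝ E] [MeasurableSpace Ω] (μ : Measure Ω) [IsProbabilityMeasure μ]
    (x g : ι → E) (ν : ι → Ω → E) (hν : ∀ i, MemLp (ν i) 2 μ) (α : ℝ) {η : ℝ} (h0 : 0 < η)
    (h1 : η < 1) :
    ∑ i, ∫ ω, ‖(x i - α • (g i + ν i ω)) -
        (Fintype.card ι : ℝ)⁻¹ • ∑ j, (x j - α • (g j + ν j ω))‖ ^ 2 ∂μ ≤
      1 / (1 - η) * ∑ i, ‖x i - (Fintype.card ι : ℝ)⁻¹ • ∑ j, x j‖ ^ 2 +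
        2 * α ^ 2 / η * ∑ i, ‖g i - (Fintype.card ι : ℝ)⁻¹ • ∑ j, g j‖ ^ 2 +
        2 * α ^ 2 / η * ∑ i, ∫ ω, ‖ν i ω‖ ^ 2 ∂μ := by
  set C := 1 / (1 - η) * ∑ i, ‖x i - (Fintype.card ι : ℝ)⁻¹ • ∑ j, x j‖ ^ 2 +
    2 * α ^ 2 / η * ∑ i, ‖g i - (Fintype.card ι : ℝ)⁻¹ • ∑ j, g j‖ ^ 2
  have hstep : ∀ i, MemLp (fun ω => x i - α • (g i + ν i ω)) 2 μ := fun i =>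
    (memLp_const (x i)).sub (((memLp_const (g i)).add (hν i)).const_smul α)
  have hdev : ∀ i, Integrable (fun ω => ‖(x i - α • (g i + ν i ω)) -
      (Fintype.card ι : ℝ)⁻¹ • ∑ j, (x j - α • (g j + ν j ω))‖ ^ 2) μ := fun i =>
    ((hstep i).sub ((memLp_finsetSum Finset.univ fun j _ => hstep j).const_smul _)).norm
      |>.integrable_sq
  have hnoise : ∀ i, Integrable (fun ω => ‖ν i ω‖ ^ 2) μ := fun i => (hν i).norm.integrable_sq
  calc _ = ∫ ω, ∑ i, ‖(x i - α • (g i + ν i ω)) -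
          (Fintype.card ι : ℝ)⁻¹ • ∑ j, (x j - α • (g j + ν j ω))‖ ^ 2 ∂μ :=
        (integral_finsetSum _ fun i _ => hdev i).symm
    _ ≤ ∫ ω, (C + 2 * α ^ 2 / η * ∑ i, ‖ν i ω‖ ^ 2) ∂μ :=
        integral_mono (integrable_finsetSum _ fun i _ => hdev i)
          ((integrable_const C).add ((integrable_finsetSum _ fun i _ => hnoise i).const_mul _))
          fun ω => sum_norm_step_sub_average_sq_le x g (ν · ω) α h0 h1
    _ = C + 2 * α ^ 2 / η * ∑ i, ∫ ω, ‖ν i ω‖ ^ 2 ∂μ := by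
      rw [integral_add (integrable_const C)
          ((integrable_finsetSum _ fun i _ => hnoise i).const_mul _),
        integral_const_mul, integral_finsetSum _ fun i _ => hnoise i, integral_const, probReal_univ,
        one_smul]

theorem stmt18_general {Ω : Type*} [MeasureSpace Ω] (μ : Measure Ω) [IsProbabilityMeasure μ]
    {n m : ℕ}
    (x g : Fin m → EuclideanSpace ℝ (Fin n))
    (noise : Fin m → Ω → EuclideanSpace ℝ (Fin n))
    (hmem : ∀ i, MemLp (noise i) 2 μ)
    (ϖ : ℝ) (h2 : ∀ i, ∫ ω, ‖noise i ω‖ ^ 2 ∂μ ≤ (n : ℝ) * ϖ ^ 2)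
    (α η : ℝ) (hη : η ∈ Set.Ioo (0:ℝ) 1)
    (xt : Fin m → Ω → EuclideanSpace ℝ (Fin n))
    (hxt : ∀ i ω, xt i ω = x i - α • (g i + noise i ω))
    (xbar : EuclideanSpace ℝ (Fin n)) (hxbar : xbar = (m : ℝ)⁻¹ • ∑ i, x i)
    (xhat : Ω → EuclideanSpace ℝ (Fin n)) (hxhat : ∀ ω, xhat ω = (m : ℝ)⁻¹ • ∑ i, xt i ω) :
    ∑ i, ∫ ω, ‖xt i ω - xhat ω‖ ^ 2 ∂μ ≤
      (1 / (1 - η)) * ∑ i, ‖x i - xbar‖ ^ 2 +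
        (2 * α ^ 2 / η) * ∑ i, ‖g i - (m : ℝ)⁻¹ • ∑ j, g j‖ ^ 2 +
        2 * (n : ℝ) * (m : ℝ) * ϖ ^ 2 * α ^ 2 / η := by
  obtain ⟨hη0, hη1⟩ := hη
  have h := sum_integral_norm_step_sub_average_sq_le μ x g noise hmem α hη0 hη1
  simp only [Fintype.card_fin] at h
  simp only [hxhat, hxt, hxbar]
  have hnoise : ∑ i, ∫ ω, ‖noise i ω‖ ^ 2 ∂μ ≤ m * (n * ϖ ^ 2) := by
    simpa using Finset.sum_le_sum fun i (_ : i ∈ Finset.univ) => h2 i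
  calc _ ≤ _ := h
    _ ≤ _ + 2 * α ^ 2 / η * (m * (n * ϖ ^ 2)) := by gcongr
    _ = _ := by ring

theorem stmt18 {Ω : Type*} [MeasureSpace Ω] (μ : Measure Ω) [IsProbabilityMeasure μ]
    {n m : ℕ} (hm : 0 < m)
    (x g : Fin m → EuclideanSpace ℝ (Fin n))
    (noise : Fin m → Ω → EuclideanSpace ℝ (Fin n))
    (hmem : ∀ i, MemLp (noise i) 2 μ)
    (hindep : ProbabilityTheory.iIndepFun noise μ)
    (hmean : ∀ i, ∫ ω, noise i ω ∂μ = 0)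
    (ϖ : ℝ) (h2 : ∀ i, ∫ ω, ‖noise i ω‖ ^ 2 ∂μ ≤ (n : ℝ) * ϖ ^ 2)
    (α η : ℝ) (hα : 0 < α) (hη : η ∈ Set.Ioo (0:ℝ) 1)
    (xt : Fin m → Ω → EuclideanSpace ℝ (Fin n))
    (hxt : ∀ i ω, xt i ω = x i - α • (g i + noise i ω))
    (xbar : EuclideanSpace ℝ (Fin n)) (hxbar : xbar = (m : ℝ)⁻¹ • ∑ i, x i)
    (xhat : Ω → EuclideanSpace ℝ (Fin n)) (hxhat : ∀ ω, xhat ω = (m : ℝ)⁻¹ • ∑ i, xt i ω) :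
    ∑ i, ∫ ω, ‖xt i ω - xhat ω‖ ^ 2 ∂μ ≤
      (1 / (1 - η)) * ∑ i, ‖x i - xbar‖ ^ 2 +
        (2 * α ^ 2 / η) * ∑ i, ‖g i - (m : ℝ)⁻¹ • ∑ j, g j‖ ^ 2 +
        2 * (n : ℝ) * (m : ℝ) * ϖ ^ 2 * α ^ 2 / η :=
  stmt18_general μ x g noise hmem ϖ h2 α η hη xt hxt xbar hxbar xhat hxhat
end
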